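/- With r = ((√q + √q')/δ)², δ² = 2(1+ρ(q,q')), and s another density with respect to μ, one has h²(s,r) = 1 − (2/δ) + (1/δ)[h²(s,q) + h²(s,q')] ≤ [h²(s,q)+h²(s,q')]/δ − h²(q,q')/4. -/

import Mathlib

/-!
Since `q` and `q'` are probability densities, `r = ((√q + √q') / δ) ^ 2` integrates to
`(2 + 2ρ(q, q')) / δ ^ 2 = 1`, so `r` is a density too, and `√r = (√q + √q') / δ` makes the
affinity `ρ(s, r)` the average `(ρ(s, q) + ρ(s, q')) / δ`. Writing `h² = 1 - ρ` gives the identity.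
The inequality then reduces to `1 ≤ 2 / δ - h²(q, q') / 4`, which after substituting
`ρ(q, q') = δ ^ 2 / 2 - 1` is `(δ - 2) ^ 2 (δ + 4) ≥ 0`.
-/

open MeasureTheory

/-- The squared Hellinger distance between the probability measures with
densities `a` and `b` with respect to `μ`. -/
noncomputable def H2 {α : Type*} [MeasurableSpace α] (μ : Measure α) (a b : α → ℝ) : ℝ :=
  (1 / 2) * ∫ x, (Real.sqrt (a x) - Real.sqrt (b x)) ^ 2 ∂μ

section Hellinger

variable {α : Type*} [MeasurableSpace α] {μ : Measure α}

lemma integrable_sqrt_mul_sqrt {a b : α → ℝ} (ha0 : ∀ x, 0 ≤ a x) (hb0 : ∀ x, 0 ≤ b x)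
    (ha : Integrable a μ) (hb : Integrable b μ) :
    Integrable (fun x => Real.sqrt (a x) * Real.sqrt (b x)) μ := by
  refine ((ha.add hb).div_const 2).mono' ?_ (.of_forall fun x => ?_)
  · exact (Real.continuous_sqrt.comp_aestronglyMeasurable ha.1).mul
      (Real.continuous_sqrt.comp_aestronglyMeasurable hb.1)
  · rw [Real.norm_eq_abs, abs_of_nonneg (by positivity), Pi.add_apply]
    nlinarith [sq_nonneg (Real.sqrt (a x) - Real.sqrt (b x)), Real.sq_sqrt (ha0 x),
      Real.sq_sqrt (hb0 x)]

lemma H2_eq_one_sub_integral_sqrt_mul_sqrt {a b : α → ℝ} (ha0 : ∀ x, 0 ≤ a x)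
    (hb0 : ∀ x, 0 ≤ b x) (ha : ∫ x, a x ∂μ = 1) (hb : ∫ x, b x ∂μ = 1) :
    H2 μ a b = 1 - ∫ x, Real.sqrt (a x) * Real.sqrt (b x) ∂μ := by
  have hIa : Integrable a μ := .of_integral_ne_zero (by simp [ha])
  have hIb : Integrable b μ := .of_integral_ne_zero (by simp [hb])
  have hexpand : ∀ x, (Real.sqrt (a x) - Real.sqrt (b x)) ^ 2
      = a x + b x - 2 * (Real.sqrt (a x) * Real.sqrt (b x)) := fun x => by
    nlinarith [Real.sq_sqrt (ha0 x), Real.sq_sqrt (hb0 x)]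
  rw [H2, integral_congr_ae (.of_forall hexpand),
    integral_sub (f := fun x => a x + b x) (hIa.add hIb)
      ((integrable_sqrt_mul_sqrt ha0 hb0 hIa hIb).const_mul 2),
    integral_add hIa hIb, integral_const_mul, ha, hb]
  ring

lemma integral_sq_sqrt_add_sqrt_div {q q' : α → ℝ} (hq0 : ∀ x, 0 ≤ q x) (hq'0 : ∀ x, 0 ≤ q' x)
    (hq : ∫ x, q x ∂μ = 1) (hq' : ∫ x, q' x ∂μ = 1) {δ : ℝ}
    (hδ2 : δ ^ 2 = 2 * (1 + ∫ x, Real.sqrt (q x * q' x) ∂μ)) :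
    ∫ x, ((Real.sqrt (q x) + Real.sqrt (q' x)) / δ) ^ 2 ∂μ = 1 := by
  have hIq : Integrable q μ := .of_integral_ne_zero (by simp [hq])
  have hIq' : Integrable q' μ := .of_integral_ne_zero (by simp [hq'])
  have hρ0 : 0 ≤ ∫ x, Real.sqrt (q x * q' x) ∂μ := integral_nonneg fun x => Real.sqrt_nonneg _
  have hexpand : ∀ x, ((Real.sqrt (q x) + Real.sqrt (q' x)) / δ) ^ 2
      = (q x + q' x + 2 * Real.sqrt (q x * q' x)) / δ ^ 2 := fun x => by
    rw [div_pow, Real.sqrt_mul (hq0 x), add_sq, Real.sq_sqrt (hq0 x), Real.sq_sqrt (hq'0 x)]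
    ring
  have hIρ : Integrable (fun x => Real.sqrt (q x * q' x)) μ := by
    simpa only [Real.sqrt_mul (hq0 _)] using integrable_sqrt_mul_sqrt hq0 hq'0 hIq hIq'
  rw [integral_congr_ae (.of_forall hexpand), integral_div,
    integral_add (f := fun x => q x + q' x) (hIq.add hIq') (hIρ.const_mul 2),
    integral_add hIq hIq', integral_const_mul, hq, hq', hδ2, div_eq_one_iff_eq (by linarith)]
  ring

end Hellinger

lemma one_le_two_div_sub_of_sq_eq {δ ρ : ℝ} (hδ : 0 < δ) (hδ2 : δ ^ 2 = 2 * (1 + ρ)) :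
    1 ≤ 2 / δ - (1 - ρ) / 4 := by
  rw [show ρ = δ ^ 2 / 2 - 1 by linarith, ← sub_nonneg]
  have key : 2 / δ - (1 - (δ ^ 2 / 2 - 1)) / 4 - 1 = (δ - 2) ^ 2 * (δ + 4) / (8 * δ) := by
    field_simp
    ring
  rw [key]
  positivity

theorem stmt11_general {α : Type*} [MeasurableSpace α] (μ : Measure α) (s q q' : α → ℝ)
    (hs0 : ∀ x, 0 ≤ s x) (hq0 : ∀ x, 0 ≤ q x) (hq'0 : ∀ x, 0 ≤ q' x)
    (hsint : ∫ x, s x ∂μ = 1) (hqint : ∫ x, q x ∂μ = 1) (hq'int : ∫ x, q' x ∂μ = 1)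
    (δ : ℝ) (hδ0 : 0 ≤ δ)
    (hδ2 : δ ^ 2 = 2 * (1 + ∫ x, Real.sqrt (q x * q' x) ∂μ)) :
    H2 μ s (fun x => ((Real.sqrt (q x) + Real.sqrt (q' x)) / δ) ^ 2)
        = 1 - 2 / δ + (1 / δ) * (H2 μ s q + H2 μ s q') ∧
    H2 μ s (fun x => ((Real.sqrt (q x) + Real.sqrt (q' x)) / δ) ^ 2)
        ≤ (H2 μ s q + H2 μ s q') / δ - (1 - ∫ x, Real.sqrt (q x * q' x) ∂μ) / 4 := by
  have hρ0 : 0 ≤ ∫ x, Real.sqrt (q x * q' x) ∂μ := integral_nonneg fun x => Real.sqrt_nonneg _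
  have hδ : 0 < δ := by nlinarith
  have hIs : Integrable s μ := .of_integral_ne_zero (by simp [hsint])
  have hIq : Integrable q μ := .of_integral_ne_zero (by simp [hqint])
  have hIq' : Integrable q' μ := .of_integral_ne_zero (by simp [hq'int])
  have hsqrt_r : ∀ x, Real.sqrt (((Real.sqrt (q x) + Real.sqrt (q' x)) / δ) ^ 2)
      = (Real.sqrt (q x) + Real.sqrt (q' x)) / δ := fun x => Real.sqrt_sq (by positivity)
  have hrho_r : ∫ x, Real.sqrt (s x) * ((Real.sqrt (q x) + Real.sqrt (q' x)) / δ) ∂μ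
      = ((∫ x, Real.sqrt (s x) * Real.sqrt (q x) ∂μ)
        + ∫ x, Real.sqrt (s x) * Real.sqrt (q' x) ∂μ) / δ := by
    simp only [mul_div_assoc', mul_add]
    rw [integral_div, integral_add (integrable_sqrt_mul_sqrt hs0 hq0 hIs hIq)
      (integrable_sqrt_mul_sqrt hs0 hq'0 hIs hIq')]
  have hidentity : H2 μ s (fun x => ((Real.sqrt (q x) + Real.sqrt (q' x)) / δ) ^ 2)
      = 1 - 2 / δ + (1 / δ) * (H2 μ s q + H2 μ s q') := by
    rw [H2_eq_one_sub_integral_sqrt_mul_sqrt hs0 (fun x => sq_nonneg _) hsint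
        (integral_sq_sqrt_add_sqrt_div hq0 hq'0 hqint hq'int hδ2),
      H2_eq_one_sub_integral_sqrt_mul_sqrt hs0 hq0 hsint hqint,
      H2_eq_one_sub_integral_sqrt_mul_sqrt hs0 hq'0 hsint hq'int]
    simp only [hsqrt_r, hrho_r]
    field_simp
    ring
  refine ⟨hidentity, ?_⟩
  rw [hidentity, one_div_mul_eq_div]
  linarith [one_le_two_div_sub_of_sq_eq hδ hδ2]

theorem stmt11 {α : Type*} [MeasurableSpace α] (μ : Measure α) (s q q' : α → ℝ)
    (hs : Measurable s) (hq : Measurable q) (hq' : Measurable q')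
    (hs0 : ∀ x, 0 ≤ s x) (hq0 : ∀ x, 0 ≤ q x) (hq'0 : ∀ x, 0 ≤ q' x)
    (hsint : ∫ x, s x ∂μ = 1) (hqint : ∫ x, q x ∂μ = 1) (hq'int : ∫ x, q' x ∂μ = 1)
    (δ : ℝ) (hδ0 : 0 ≤ δ)
    (hδ2 : δ ^ 2 = 2 * (1 + ∫ x, Real.sqrt (q x * q' x) ∂μ)) :
    H2 μ s (fun x => ((Real.sqrt (q x) + Real.sqrt (q' x)) / δ) ^ 2)
        = 1 - 2 / δ + (1 / δ) * (H2 μ s q + H2 μ s q') ∧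
    H2 μ s (fun x => ((Real.sqrt (q x) + Real.sqrt (q' x)) / δ) ^ 2)
        ≤ (H2 μ s q + H2 μ s q') / δ - (1 - ∫ x, Real.sqrt (q x * q' x) ∂μ) / 4 :=
  stmt11_general μ s q q' hs0 hq0 hq'0 hsint hqint hq'int δ hδ0 hδ2
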